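/- Let 1 < q ≤ 2 ≤ p and let x, y ∈ ℝ^d with all entries of x strictly positive. Then ‖x + y‖_q^{pq} − ‖x‖_q^{pq} − pq·‖x‖_q^{(p−1)q}·Σ_{j=1}^d x_j^{q−1}·y_j ≥ (p(q−1)/20)·‖x‖_q^{(p−1)q}·Σ_{j=1}^d γ_q(y_j; x_j) + ((q−1)/100)^p·(Σ_{j=1}^d γ_q(y_j; x_j))^p. -/

import Mathlib

noncomputable def gammaQ (q x f : ℝ) : ℝ :=
  if |x| ≤ f then (q / 2) * f ^ (q - 2) * x ^ 2 else |x| ^ q - (1 - q / 2) * f ^ q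

noncomputable def normQ (q : ℝ) {d : ℕ} (x : Fin d → ℝ) : ℝ :=
  (∑ j, |x j| ^ q) ^ (1 / q)

/-!
For `f > 0` and every `y`, `|f + y|^q ≥ f^q + q f^(q-1) y + (q-1)/4 · γ_q(y; f)`. By homogeneity
it suffices to take `f = 1`; on each of the pieces `|u| ≤ 1`, `u ≥ 1`, `u ≤ -1` the difference
is monotone away from the break point, by sign estimates on its derivative. Summing over the
coordinates, with `a = ‖x + y‖_q^q`, `b = ‖x‖_q^q` and `G = Σ_j γ_q(y_j; x_j)`, gives
`a - b - q Σ_j x_j^(q-1) y_j ≥ (q-1)/4 · G` together with the crude bound `G ≤ 3b + 2a`.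

This is lifted to the `p`-th powers through the convexity of `t ↦ t^p`. With `g = (q-1)G/100`,
either `g ≤ b`, and then `g^p ≤ b^(p-1) g` is absorbed by the first-order term, or the crude
bound forces `g ≤ a - b`, and then `a^p - b^p - p b^(p-1) (a - b) ≥ (a - b)^p ≥ g^p`
as `p ≥ 2`.
-/

open Real Set

lemma one_add_mul_log_le_rpow {x : ℝ} (hx : 0 < x) (s : ℝ) : 1 + s * log x ≤ x ^ s := by
  rw [rpow_def_of_pos hx, mul_comm]
  exact (add_comm _ _).trans_le (add_one_le_exp _)

lemma one_add_half_mul_le_one_add_rpow {s u : ℝ} (hs : 0 ≤ s) (hu0 : 0 ≤ u) (hu1 : u ≤ 1) :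
    1 + s / 2 * u ≤ (1 + u) ^ s := by
  have hlog : u / 2 ≤ log (1 + u) := calc
    u / 2 ≤ u / (1 + u) := div_le_div_of_nonneg_left hu0 (by linarith) (by linarith)
    _ = 1 - (1 + u)⁻¹ := by field_simp; ring
    _ ≤ log (1 + u) := one_sub_inv_le_log_of_pos (by positivity)
  nlinarith [one_add_mul_log_le_rpow (by positivity : 0 < 1 + u) s]

lemma one_add_mul_rpow_le_one_add_rpow {s u : ℝ} (hs0 : 0 ≤ s) (hs1 : s ≤ 1) (hu : 1 ≤ u) :
    1 + s / 4 * u ^ s ≤ (1 + u) ^ s := by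
  have hmono : u ^ s ≤ (1 + u) ^ s := rpow_le_rpow (by linarith) (by linarith) hs0
  rcases le_or_gt (u ^ s) 2 with h | h
  · have h2 : (2 : ℝ) ^ s ≤ (1 + u) ^ s := rpow_le_rpow (by norm_num) (by linarith) hs0
    nlinarith [one_add_mul_log_le_rpow two_pos s, log_two_gt_d9]
  · nlinarith

lemma one_add_add_mul_le_two_rpow {q : ℝ} (hq1 : 1 ≤ q) (hq2 : q ≤ 2) :
    1 + q + q * (q - 1) / 8 ≤ (2 : ℝ) ^ q := by
  have h : (2 : ℝ) ^ q = 2 * 2 ^ (q - 1) := by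
    rw [rpow_sub_one two_ne_zero]; ring
  nlinarith [one_add_mul_log_le_rpow two_pos (q - 1), log_two_gt_d9]

lemma rpow_add_le_two_mul_rpow_add_rpow {p a b : ℝ} (ha : 0 ≤ a) (hb : 0 ≤ b) (hp1 : 1 ≤ p)
    (hp2 : p ≤ 2) : (a + b) ^ p ≤ 2 * (a ^ p + b ^ p) := by
  lift a to NNReal using ha
  lift b to NNReal using hb
  have h2 : (2 : NNReal) ^ (p - 1) ≤ 2 := by
    simpa using
      NNReal.rpow_le_rpow_of_exponent_le (x := 2) (by norm_num) (by linarith : p - 1 ≤ 1)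
  exact_mod_cast (NNReal.rpow_add_le_mul_rpow_add_rpow a b hp1).trans
    (mul_le_mul_of_nonneg_right h2 zero_le)

section Scalar

variable {q f : ℝ}

lemma hasDerivAt_one_add_rpow (hq : 1 ≤ q) (v : ℝ) :
    HasDerivAt (fun v : ℝ => (1 + v) ^ q) (q * (1 + v) ^ (q - 1)) v := by
  simpa using ((hasDerivAt_id v).const_add 1).rpow_const (p := q) (Or.inr hq)

lemma le_one_add_rpow_of_abs_le_one (hq1 : 1 ≤ q) (hq2 : q ≤ 2) {u : ℝ} (hu : |u| ≤ 1) :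
    1 + q * u + (q - 1) / 4 * (q / 2 * u ^ 2) ≤ (1 + u) ^ q := by
  set F : ℝ → ℝ := fun v => (1 + v) ^ q - q * v - (q - 1) / 4 * (q / 2 * v ^ 2)
  set F' : ℝ → ℝ := fun v => q * ((1 + v) ^ (q - 1) - 1 - (q - 1) / 4 * v)
  have hF : Continuous F := by fun_prop (disch := linarith)
  have hF' (v : ℝ) : HasDerivAt F (F' v) v := by
    refine (((hasDerivAt_one_add_rpow hq1 v).sub ((hasDerivAt_id' v).const_mul q)).sub
      (((hasDerivAt_pow 2 v).const_mul (q / 2)).const_mul ((q - 1) / 4))).congr_deriv ?_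
    simp only [F']; ring
  obtain ⟨hu0, hu1⟩ := abs_le.mp hu
  suffices F 0 ≤ F u by simp only [F] at this; norm_num at this; linarith
  rcases le_total 0 u with hu | hu
  · refine monotoneOn_of_hasDerivWithinAt_nonneg (convex_Icc 0 1) hF.continuousOn
      (fun v _ => (hF' v).hasDerivWithinAt) (fun v hv => ?_) ⟨le_rfl, zero_le_one⟩ ⟨hu, hu1⟩
      hu
    rw [interior_Icc] at hv
    have := one_add_half_mul_le_one_add_rpow (by linarith : 0 ≤ q - 1) hv.1.le hv.2.le
    have hv' : 0 ≤ (q - 1) * v := by nlinarith [hv.1]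
    show 0 ≤ q * _; nlinarith
  · refine antitoneOn_of_hasDerivWithinAt_nonpos (convex_Icc (-1) 0) hF.continuousOn
      (fun v _ => (hF' v).hasDerivWithinAt) (fun v hv => ?_) ⟨hu0, hu⟩ ⟨by norm_num, le_rfl⟩
      hu
    rw [interior_Icc] at hv
    have := rpow_one_add_le_one_add_mul_self hv.1.le (by linarith : 0 ≤ q - 1) (by linarith)
    have hv' : 0 ≤ (q - 1) * -v := by nlinarith [hv.2]
    show q * _ ≤ 0; nlinarith

lemma le_one_add_rpow_of_one_le (hq1 : 1 ≤ q) (hq2 : q ≤ 2) {u : ℝ} (hu : 1 ≤ u) :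
    1 + q * u + (q - 1) / 4 * (u ^ q - (1 - q / 2)) ≤ (1 + u) ^ q := by
  set F : ℝ → ℝ := fun v => (1 + v) ^ q - q * v - (q - 1) / 4 * v ^ q
  set F' : ℝ → ℝ := fun v => q * ((1 + v) ^ (q - 1) - 1 - (q - 1) / 4 * v ^ (q - 1))
  have hF : Continuous F := by fun_prop (disch := linarith)
  have hF' (v : ℝ) : HasDerivAt F (F' v) v := by
    refine (((hasDerivAt_one_add_rpow hq1 v).sub ((hasDerivAt_id' v).const_mul q)).sub
      ((hasDerivAt_rpow_const (Or.inr hq1)).const_mul ((q - 1) / 4))).congr_deriv ?_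
    simp only [F']; ring
  have hmono : F 1 ≤ F u := by
    refine monotoneOn_of_hasDerivWithinAt_nonneg (convex_Ici 1) hF.continuousOn
      (fun v _ => (hF' v).hasDerivWithinAt) (fun v hv => ?_) self_mem_Ici hu hu
    rw [interior_Ici, mem_Ioi] at hv
    have := one_add_mul_rpow_le_one_add_rpow (by linarith : 0 ≤ q - 1) (by linarith) hv.le
    show 0 ≤ q * _; nlinarith
  have h2 := one_add_add_mul_le_two_rpow hq1 hq2
  simp only [F] at hmono; norm_num at hmono; nlinarith

lemma le_sub_one_rpow_of_one_le (hq1 : 1 ≤ q) (hq2 : q ≤ 2) {w : ℝ} (hw : 1 ≤ w) :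
    1 - q * w + (q - 1) / 4 * (w ^ q - (1 - q / 2)) ≤ (w - 1) ^ q := by
  set F : ℝ → ℝ := fun v => (v - 1) ^ q + q * v - (q - 1) / 4 * v ^ q
  set F' : ℝ → ℝ := fun v => q * ((v - 1) ^ (q - 1) + 1 - (q - 1) / 4 * v ^ (q - 1))
  have hF : Continuous F := by fun_prop (disch := linarith)
  have hF' (v : ℝ) : HasDerivAt F (F' v) v := by
    refine ((((hasDerivAt_id' v).sub_const 1).rpow_const (Or.inr hq1)).add
      ((hasDerivAt_id' v).const_mul q)).sub
      ((hasDerivAt_rpow_const (Or.inr hq1)).const_mul ((q - 1) / 4)) |>.congr_deriv ?_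
    simp only [F']; ring
  have hmono : F 1 ≤ F w := by
    refine monotoneOn_of_hasDerivWithinAt_nonneg (convex_Ici 1) hF.continuousOn
      (fun v _ => (hF' v).hasDerivWithinAt) (fun v hv => ?_) self_mem_Ici hw hw
    rw [interior_Ici, mem_Ioi] at hv
    have hsub := rpow_add_le_add_rpow (by linarith : 0 ≤ v - 1) zero_le_one
      (by linarith : 0 ≤ q - 1) (by linarith)
    rw [sub_add_cancel, one_rpow] at hsub
    have := rpow_nonneg (by linarith : 0 ≤ v) (q - 1)
    exact mul_nonneg (by linarith) (by nlinarith)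
  simp only [F] at hmono
  rw [sub_self, zero_rpow (by linarith), one_rpow] at hmono
  nlinarith

lemma gammaQ_nonneg (hq : 0 ≤ q) (hf : 0 < f) (y : ℝ) : 0 ≤ gammaQ q y f := by
  rw [gammaQ]
  split_ifs with hy
  · have := rpow_pos_of_pos hf (q - 2)
    positivity
  · have := rpow_le_rpow hf.le (not_le.mp hy).le hq
    nlinarith [rpow_pos_of_pos hf q]

lemma rpow_sub_two_mul_sq (hf : 0 < f) (q : ℝ) : f ^ (q - 2) * f ^ 2 = f ^ q := by
  rw [rpow_sub hf, rpow_two]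
  field_simp

lemma gammaQ_le_rpow_add_abs_rpow (hq : q ≤ 2) (hf : 0 < f) (y : ℝ) :
    gammaQ q y f ≤ f ^ q + |y| ^ q := by
  have := rpow_nonneg (abs_nonneg y) q
  rw [gammaQ]
  split_ifs with hy
  · have hsq : y ^ 2 ≤ f ^ 2 := sq_le_sq' (abs_le.mp hy).1 (abs_le.mp hy).2
    have h := mul_le_mul_of_nonneg_left hsq (rpow_pos_of_pos hf (q - 2)).le
    rw [rpow_sub_two_mul_sq hf] at h
    nlinarith [mul_nonneg (rpow_pos_of_pos hf (q - 2)).le (sq_nonneg y)]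
  · nlinarith [rpow_pos_of_pos hf q]

lemma gammaQ_le (hq1 : 1 ≤ q) (hq2 : q ≤ 2) (hf : 0 < f) (y : ℝ) :
    gammaQ q y f ≤ 3 * f ^ q + 2 * |f + y| ^ q := by
  have htri : |y| ≤ f + |f + y| := by
    simpa [abs_of_pos hf, add_comm] using abs_sub (f + y) f
  have := (rpow_le_rpow (abs_nonneg y) htri (by linarith)).trans
    (rpow_add_le_two_mul_rpow_add_rpow hf.le (abs_nonneg _) hq1 hq2)
  linarith [gammaQ_le_rpow_add_abs_rpow hq2 hf y]

lemma gammaQ_mul_self (hf : 0 < f) (u : ℝ) : gammaQ q (f * u) f = f ^ q * gammaQ q u 1 := by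
  have habs : |f * u| = f * |u| := by rw [abs_mul, abs_of_pos hf]
  simp only [gammaQ, habs, one_rpow, mul_le_iff_le_one_right hf]
  split_ifs
  · rw [← rpow_sub_two_mul_sq hf q]; ring
  · rw [mul_rpow hf.le (abs_nonneg u)]; ring

lemma one_add_mul_add_gammaQ_le (hq1 : 1 ≤ q) (hq2 : q ≤ 2) (u : ℝ) :
    1 + q * u + (q - 1) / 4 * gammaQ q u 1 ≤ |1 + u| ^ q := by
  rw [gammaQ, one_rpow, one_rpow]
  split_ifs with hu
  · rw [abs_of_nonneg (by linarith [(abs_le.mp hu).1])]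
    simpa using le_one_add_rpow_of_abs_le_one hq1 hq2 hu
  · rcases lt_abs.mp (not_le.mp hu) with hu | hu
    · rw [abs_of_pos (by linarith), abs_of_pos (by linarith)]
      simpa using le_one_add_rpow_of_one_le hq1 hq2 hu.le
    · rw [abs_of_neg (by linarith), abs_of_neg (by linarith)]
      have := le_sub_one_rpow_of_one_le hq1 hq2 hu.le
      rw [show -u - 1 = -(1 + u) by ring] at this
      linarith

lemma rpow_add_mul_add_gammaQ_le (hq1 : 1 ≤ q) (hq2 : q ≤ 2) (hf : 0 < f) (y : ℝ) :
    f ^ q + q * f ^ (q - 1) * y + (q - 1) / 4 * gammaQ q y f ≤ |f + y| ^ q := by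
  obtain ⟨u, rfl⟩ : ∃ u, y = f * u := ⟨y / f, by field_simp⟩
  have h := mul_le_mul_of_nonneg_left (one_add_mul_add_gammaQ_le hq1 hq2 u) (rpow_nonneg hf.le q)
  rw [gammaQ_mul_self hf, show f + f * u = f * (1 + u) by ring, abs_mul, abs_of_pos hf,
    mul_rpow hf.le (abs_nonneg _), rpow_sub_one hf.ne']
  calc _ = f ^ q * (1 + q * u + (q - 1) / 4 * gammaQ q u 1) := by field_simp
    _ ≤ _ := h

end Scalar

section Lifting

variable {p a b : ℝ}

lemma rpow_tangent_le (hp : 1 ≤ p) (ha : 0 ≤ a) (hb : 0 ≤ b) :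
    b ^ p + p * b ^ (p - 1) * (a - b) ≤ a ^ p := by
  rcases hb.eq_or_lt with rfl | hb
  · rcases hp.eq_or_lt with rfl | hp
    · simp
    · rw [zero_rpow (by linarith), zero_rpow (by linarith)]
      simpa using rpow_nonneg ha p
  · have h := one_add_mul_self_le_rpow_one_add (s := a / b - 1)
      (by linarith [div_nonneg ha hb.le]) hp
    rw [add_sub_cancel, div_rpow ha hb.le, le_div_iff₀ (rpow_pos_of_pos hb p)] at h
    calc b ^ p + p * b ^ (p - 1) * (a - b) = (1 + p * (a / b - 1)) * b ^ p := by
          rw [rpow_sub_one hb.ne']; field_simp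
      _ ≤ a ^ p := h

lemma rpow_tangent_add_rpow_le {t : ℝ} (hp : 2 ≤ p) (hb : 0 ≤ b) (ht : 0 ≤ t) :
    b ^ p + p * b ^ (p - 1) * t + t ^ p ≤ (b + t) ^ p := by
  have hsq (x : ℝ) (hx : 0 ≤ x) (r : ℝ) : (x ^ 2) ^ r = x ^ (2 * r) := by
    exact_mod_cast (rpow_natCast_mul hx 2 r).symm
  -- `(b + t)^2 = (b^2 + 2bt) + t^2`: superadditivity of `x ↦ x^(p/2)`, then the tangent line
  -- at `b^2`.
  have hsup := add_rpow_le_rpow_add (by positivity : 0 ≤ b ^ 2 + 2 * b * t) (sq_nonneg t)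
    (by linarith : 1 ≤ p / 2)
  have htan := rpow_tangent_le (by linarith : 1 ≤ p / 2)
    (by positivity : 0 ≤ b ^ 2 + 2 * b * t) (sq_nonneg b)
  rw [show b ^ 2 + 2 * b * t + t ^ 2 = (b + t) ^ 2 by ring, hsq (b + t) (by positivity),
    hsq t ht] at hsup
  rw [hsq _ hb, hsq _ hb] at htan
  have hmid : p / 2 * b ^ (2 * (p / 2 - 1)) * (b ^ 2 + 2 * b * t - b ^ 2) =
      p * b ^ (p - 1) * t := by
    rw [show p - 1 = 2 * (p / 2 - 1) + 1 by ring, rpow_add_one' hb (by linarith)]; ring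
  rw [show 2 * (p / 2) = p by ring] at hsup htan
  linarith

lemma rpow_le_bregman_add {g : ℝ} (hp : 2 ≤ p) (ha : 0 ≤ a) (hb : 0 ≤ b) (hg : 0 ≤ g)
    (h : g ≤ b ∨ g ≤ a - b) :
    g ^ p ≤ a ^ p - b ^ p - p * b ^ (p - 1) * (a - b) + b ^ (p - 1) * g := by
  have hD := rpow_tangent_le (p := p) (by linarith) ha hb
  rcases h with h | h
  · have hmono := mul_le_mul_of_nonneg_right (rpow_le_rpow hg h (by linarith : 0 ≤ p - 1)) hg
    rw [← rpow_add_one' hg (by linarith), sub_add_cancel] at hmono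
    linarith
  · have hab := rpow_tangent_add_rpow_le hp hb (hg.trans h)
    rw [add_sub_cancel] at hab
    nlinarith [rpow_le_rpow hg h (by linarith : 0 ≤ p), mul_nonneg (rpow_nonneg hb (p - 1)) hg]

lemma rpow_bregman_lower_bound {q G S : ℝ} (hq1 : 1 ≤ q) (hq2 : q ≤ 2) (hp : 2 ≤ p)
    (ha : 0 ≤ a) (hb : 0 ≤ b) (hG : 0 ≤ G)
    (hlow : b + S + (q - 1) / 4 * G ≤ a) (hup : G ≤ 3 * b + 2 * a) :
    p * (q - 1) / 20 * b ^ (p - 1) * G + ((q - 1) / 100) ^ p * G ^ p ≤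
      a ^ p - b ^ p - p * b ^ (p - 1) * S := by
  have hg : 0 ≤ (q - 1) / 100 * G := by positivity
  have hcase : (q - 1) / 100 * G ≤ b ∨ (q - 1) / 100 * G ≤ a - b := by
    rcases le_or_gt ((q - 1) / 100 * G) b with h | h
    · exact Or.inl h
    -- `g ≤ G/100`, so `b < G/100`, and then `hup` gives `a - b ≥ 0.475 G`.
    · right; nlinarith
  have key := rpow_le_bregman_add hp ha hb hg hcase
  rw [mul_rpow (by linarith) hG] at key
  have hB := rpow_nonneg hb (p - 1)
  nlinarith [mul_le_mul_of_nonneg_left hlow (by positivity : 0 ≤ p * b ^ (p - 1)),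
    mul_nonneg (mul_nonneg hB hG) (by linarith : 0 ≤ q - 1)]

end Lifting

lemma normQ_rpow_mul {q : ℝ} (hq : q ≠ 0) {d : ℕ} (x : Fin d → ℝ) (r : ℝ) :
    normQ q x ^ (r * q) = (∑ j, |x j| ^ q) ^ r := by
  rw [normQ, ← rpow_mul (Finset.sum_nonneg fun j _ => rpow_nonneg (abs_nonneg _) q)]
  congr 1
  field_simp

theorem stmt6 (q p : ℝ) (hq1 : 1 < q) (hq2 : q ≤ 2) (hp : 2 ≤ p) (d : ℕ)
    (x y : Fin d → ℝ) (hx : ∀ j, 0 < x j) :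
    (p * (q - 1) / 20) * normQ q x ^ ((p - 1) * q) * (∑ j, gammaQ q (y j) (x j)) +
      ((q - 1) / 100) ^ p * (∑ j, gammaQ q (y j) (x j)) ^ p ≤
    normQ q (x + y) ^ (p * q) - normQ q x ^ (p * q) -
      p * q * normQ q x ^ ((p - 1) * q) * ∑ j, x j ^ (q - 1) * y j := by
  have hq : q ≠ 0 := by positivity
  have hxabs (j : Fin d) : |x j| = x j := abs_of_pos (hx j)
  simp only [normQ_rpow_mul hq, Pi.add_apply, hxabs]
  have hlow : ∑ j, x j ^ q + q * ∑ j, x j ^ (q - 1) * y j +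
      (q - 1) / 4 * ∑ j, gammaQ q (y j) (x j) ≤ ∑ j, |x j + y j| ^ q := by
    simpa [Finset.sum_add_distrib, Finset.mul_sum, mul_assoc] using Finset.sum_le_sum
      fun j _ => rpow_add_mul_add_gammaQ_le hq1.le hq2 (hx j) (y j)
  have hup : ∑ j, gammaQ q (y j) (x j) ≤ 3 * ∑ j, x j ^ q + 2 * ∑ j, |x j + y j| ^ q := by
    simpa [Finset.sum_add_distrib, Finset.mul_sum] using Finset.sum_le_sum
      fun j _ => gammaQ_le hq1.le hq2 (hx j) (y j)
  have := rpow_bregman_lower_bound (S := q * ∑ j, x j ^ (q - 1) * y j) hq1.le hq2 hp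
    (Finset.sum_nonneg fun j _ => rpow_nonneg (abs_nonneg _) q)
    (Finset.sum_nonneg fun j _ => rpow_nonneg (hx j).le q)
    (Finset.sum_nonneg fun j _ => gammaQ_nonneg (by linarith) (hx j) (y j)) (by linarith) hup
  linarith
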